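/- arXiv:1303.0164 — 7 statements merged into one kernel-verified Lean document; each statement's English description precedes it below -/
import Mathlib

section
/- Let k be an algebraically closed field with a nontrivial nonarchimedean absolute value, and let F be a field extension of k that is finitely generated of transcendence degree 1 over k. If v is an absolute value on F extending that of k which is a point of type II, then the value group of v on F equals the value group of k: v(F^×) = |k^×| as subgroups of the positive reals. -/
noncomputable section

/-- An absolute value is nonarchimedean if it satisfies the ultrametric inequality. -/
def IsNA {F : Type*} [Field F] (v : AbsoluteValue F ℝ) : Prop :=
  ∀ x y : F, v (x + y) ≤ max (v x) (v y)

/-- A field is complete with respect to an absolute value if every Cauchy sequence converges. -/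
def SeqComplete {F : Type*} [Field F] (v : AbsoluteValue F ℝ) : Prop :=
  ∀ s : ℕ → F, (∀ ε : ℝ, 0 < ε → ∃ N : ℕ, ∀ m ≥ N, ∀ n ≥ N, v (s m - s n) < ε) →
    ∃ L : F, ∀ ε : ℝ, 0 < ε → ∃ N : ℕ, ∀ n ≥ N, v (s n - L) < ε

/-- The valuation ring `O_v = {f | v f ≤ 1}` of a nonarchimedean absolute value. -/
def vRing {F : Type*} [Field F] (v : AbsoluteValue F ℝ) (h : IsNA v) : Subring F where
  carrier := {x : F | v x ≤ 1}
  mul_mem' := fun {a b} ha hb => by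
    simp only [Set.mem_setOf_eq, map_mul] at *
    exact mul_le_one₀ ha (v.nonneg b) hb
  one_mem' := by simp only [Set.mem_setOf_eq, map_one, le_refl]
  add_mem' := fun {a b} ha hb => le_trans (h a b) (max_le ha hb)
  zero_mem' := by simp only [Set.mem_setOf_eq, map_zero, zero_le_one]
  neg_mem' := fun {a} ha => by simpa only [Set.mem_setOf_eq, v.map_neg] using ha

/-- The maximal ideal `{f | v f < 1}` of the valuation ring. -/
def vIdeal {F : Type*} [Field F] (v : AbsoluteValue F ℝ) (h : IsNA v) :
    Ideal (vRing v h) where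
  carrier := {x : vRing v h | v (x : F) < 1}
  add_mem' := fun {a b} ha hb => lt_of_le_of_lt (h a b) (max_lt ha hb)
  zero_mem' := by simp only [Set.mem_setOf_eq, ZeroMemClass.coe_zero, map_zero, zero_lt_one]
  smul_mem' := fun c x hx => by
    simp only [Set.mem_setOf_eq, smul_eq_mul, Subring.coe_mul, map_mul] at *
    have h1 : v (c : F) ≤ 1 := c.2
    nlinarith [v.nonneg (c : F), v.nonneg (x : F)]

/-- The residue field `κ(v)` of a nonarchimedean absolute value. -/
abbrev ResF {F : Type*} [Field F] (v : AbsoluteValue F ℝ) (h : IsNA v) :=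
  vRing v h ⧸ vIdeal v h

/-- The induced map of residue fields `κ(v) → κ(w)` coming from an embedding of
valued fields `σ : F → F'` with `w ∘ σ = v`. -/
def resMap {F F' : Type*} [Field F] [Field F'] (σ : F →+* F')
    (v : AbsoluteValue F ℝ) (w : AbsoluteValue F' ℝ) (hv : IsNA v) (hw : IsNA w)
    (hc : ∀ f : F, w (σ f) = v f) :
    ResF v hv →+* ResF w hw :=
  Ideal.quotientMap (vIdeal w hw)
    ((σ.comp (vRing v hv).subtype).codRestrict (vRing w hw)
      (fun x => by
        have hx : v (x : F) ≤ 1 := x.2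
        show σ (x : F) ∈ vRing w hw
        show w (σ (x : F)) ≤ 1
        rw [hc]
        exact hx))
    (fun x hx => by
      have hx' : v (x : F) < 1 := hx
      show _ ∈ vIdeal w hw
      show w (σ (x : F)) < 1
      rw [hc]
      exact hx')

/-!
Lift the transcendental residue class to `X ∈ O_v`. After scaling `p ∈ k[T]` so that its
largest coefficient is `1`, its reduction is a nonzero polynomial, which does not vanish at the
residue of `X`; hence `v(p(X))` is the Gauss norm of `p`. So `X` is transcendental over `k` and
`v(k[X]) ⊆ |k|`. As `F` has transcendence degree `1`, every `f ∈ F` is algebraic over `k[X]`,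
and in a vanishing sum `∑ aᵢ fⁱ` two terms have the same absolute value, so `v(f)ⁿ ∈ |kˣ|` for
some `n > 0`; since `k` is algebraically closed, `|kˣ|` is divisible.
-/

open Polynomial

lemma IsNonarchimedean.exists_ne_apply_eq_of_sum_eq_zero {F : Type*} [Field F]
    {v : AbsoluteValue F ℝ} (hv : IsNonarchimedean v) {ι : Type*} {s : Finset ι}
    (hs : s.Nonempty) {l : ι → F} (hl : ∀ i ∈ s, l i ≠ 0) (hsum : ∑ i ∈ s, l i = 0) :
    ∃ i ∈ s, ∃ j ∈ s, i ≠ j ∧ v (l i) = v (l j) := by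
  obtain ⟨m, hm, hmax⟩ := s.exists_max_image (fun i => v (l i)) hs
  by_contra! hne
  have hlt : ∀ j ∈ s, j ≠ m → v (l j) < v (l m) :=
    fun j hj hjm => (hmax j hj).lt_of_ne (hne j hj m hm hjm)
  have := hv.apply_sum_eq_of_lt (fun a => (v.map_neg a).symm) hm hlt
  rw [hsum, map_zero] at this
  exact hl m hm (v.eq_zero.mp this.symm)

lemma AbsoluteValue.mem_range_of_pow_mem_range {k : Type*} [Field k] [IsAlgClosed k]
    (va : AbsoluteValue k ℝ) {t : ℝ} (ht : 0 ≤ t) {n : ℕ} (hn : n ≠ 0)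
    (h : t ^ n ∈ Set.range va) : t ∈ Set.range va := by
  obtain ⟨c, hc⟩ := h
  obtain ⟨d, rfl⟩ := IsAlgClosed.exists_pow_nat_eq c (Nat.pos_of_ne_zero hn)
  exact ⟨d, (pow_left_inj₀ (va.nonneg d) ht hn).mp (by rw [← map_pow, hc])⟩

lemma IsNonarchimedean.apply_mem_range_of_eval_eq_zero {k F : Type*} [Field k] [IsAlgClosed k]
    [Field F] (va : AbsoluteValue k ℝ) {v : AbsoluteValue F ℝ} (hv : IsNonarchimedean v)
    {P : F[X]} (hP : P ≠ 0) (hcoeff : ∀ i, v (P.coeff i) ∈ Set.range va) {f : F}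
    (hf : P.eval f = 0) : v f ∈ Set.range va := by
  rcases eq_or_ne f 0 with rfl | hf0
  · exact ⟨0, by simp⟩
  have hterm : ∀ i ∈ P.support, P.coeff i * f ^ i ≠ 0 :=
    fun i hi => mul_ne_zero (mem_support_iff.mp hi) (pow_ne_zero i hf0)
  rw [eval_eq_sum, sum_def] at hf
  obtain ⟨i, hi, j, hj, hij, heq⟩ := hv.exists_ne_apply_eq_of_sum_eq_zero
    (support_nonempty.mpr hP) hterm hf
  wlog hlt : i < j generalizing i j
  · exact this j hj i hi hij.symm heq.symm (hij.symm.lt_of_le (not_lt.mp hlt))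
  have hvj : v (P.coeff j) ≠ 0 := v.ne_zero (mem_support_iff.mp hj)
  obtain ⟨ci, hci⟩ := hcoeff i
  obtain ⟨cj, hcj⟩ := hcoeff j
  refine va.mem_range_of_pow_mem_range (v.nonneg f) (Nat.sub_ne_zero_of_lt hlt) ⟨ci / cj, ?_⟩
  have hfi : v f ^ i ≠ 0 := pow_ne_zero i (v.ne_zero hf0)
  simp only [map_mul, map_pow] at heq
  rw [map_div₀, hci, hcj, div_eq_iff hvj]
  apply mul_left_cancel₀ hfi
  rw [mul_comm, heq, ← pow_sub_mul_pow (v f) hlt.le]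
  ring

section ResidueField

variable {F F' : Type*} [Field F] [Field F'] (σ : F →+* F') {v : AbsoluteValue F ℝ}
  {w : AbsoluteValue F' ℝ} (hv : IsNA v) (hw : IsNA w) (hc : ∀ f : F, w (σ f) = v f)

def vRingMap : vRing v hv →+* vRing w hw :=
  (σ.comp (vRing v hv).subtype).codRestrict (vRing w hw)
    (fun x => show w (σ x) ≤ 1 from (hc x).trans_le x.2)

lemma resMap_comp_mk :
    (resMap σ v w hv hw hc).comp (Ideal.Quotient.mk (vIdeal v hv)) =
      (Ideal.Quotient.mk (vIdeal w hw)).comp (vRingMap σ hv hw hc) :=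
  Ideal.quotientMap_comp_mk _

lemma coe_eval₂_vRingMap (q : (vRing v hv)[X]) (x : vRing w hw) :
    ((q.eval₂ (vRingMap σ hv hw hc) x : vRing w hw) : F') =
      (q.map (vRing v hv).subtype).eval₂ σ x := by
  rw [eval₂_map, ← (vRing w hw).coe_subtype, hom_eval₂]
  rfl

lemma mk_eval₂_vRingMap (q : (vRing v hv)[X]) (x : vRing w hw) :
    Ideal.Quotient.mk (vIdeal w hw) (q.eval₂ (vRingMap σ hv hw hc) x) =
      (q.map (Ideal.Quotient.mk (vIdeal v hv))).eval₂ (resMap σ v w hv hw hc)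
        (Ideal.Quotient.mk (vIdeal w hw) x) := by
  rw [hom_eval₂, eval₂_map, resMap_comp_mk]

variable {σ hv hw hc}

lemma apply_eval₂_eq_one {x : vRing w hw}
    (hx : ∀ p : (ResF v hv)[X],
      p.eval₂ (resMap σ v w hv hw hc) (Ideal.Quotient.mk (vIdeal w hw) x) = 0 → p = 0)
    {q : (vRing v hv)[X]} {i : ℕ} (hi : v (q.coeff i) = 1) :
    w ((q.map (vRing v hv).subtype).eval₂ σ x) = 1 := by
  rw [← coe_eval₂_vRingMap]
  refine le_antisymm (q.eval₂ (vRingMap σ hv hw hc) x).2 (not_lt.mp fun hlt => ?_)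
  have hred : q.map (Ideal.Quotient.mk (vIdeal v hv)) ≠ 0 := by
    intro h0
    have : q.coeff i ∈ vIdeal v hv := by
      rw [← Ideal.Quotient.eq_zero_iff_mem, ← coeff_map, h0, coeff_zero]
    exact (show v (q.coeff i) < 1 from this).ne hi
  refine hred (hx _ ?_)
  rw [← mk_eval₂_vRingMap, Ideal.Quotient.eq_zero_iff_mem]
  exact hlt

lemma apply_eval₂_eq_gaussNorm {x : vRing w hw}
    (hx : ∀ p : (ResF v hv)[X],
      p.eval₂ (resMap σ v w hv hw hc) (Ideal.Quotient.mk (vIdeal w hw) x) = 0 → p = 0)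
    (p : F[X]) : w (p.eval₂ σ x) = p.gaussNorm v 1 := by
  rcases eq_or_ne p 0 with rfl | hp
  · simp
  obtain ⟨i, hi⟩ := p.exists_eq_gaussNorm v 1
  rw [one_pow, mul_one] at hi
  set c := p.coeff i
  have hc0 : c ≠ 0 := fun h0 => hp <| (gaussNorm_eq_zero_iff (p := p) v (c := 1)
    (fun _ => v.eq_zero.mp) one_pos).mp (by rw [hi, h0, map_zero])
  -- normalize `p` so that its largest coefficient is `1`
  set q := C c⁻¹ * p
  have hq : ∀ j, v (q.coeff j) ≤ 1 := fun j => by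
    rw [coeff_C_mul, map_mul, map_inv₀, inv_mul_le_iff₀ (v.pos hc0), mul_one, ← hi]
    simpa using p.le_gaussNorm v zero_le_one j
  have hqi : v (q.coeff i) = 1 := by
    rw [coeff_C_mul, map_mul, map_inv₀, inv_mul_cancel₀ (v.ne_zero hc0)]
  have hqO : (q.coeffs : Set F) ⊆ vRing v hv := fun a ha => by
    obtain ⟨j, -, rfl⟩ := mem_coeffs_iff.mp ha
    exact hq j
  have hpq : p = C c * (q.toSubring _ hqO).map (vRing v hv).subtype := by
    rw [map_toSubring, ← mul_assoc, ← C_mul, mul_inv_cancel₀ hc0, C_1, one_mul]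
  rw [hi, hpq, eval₂_mul, eval₂_C, map_mul, hc,
    apply_eval₂_eq_one hx (i := i) (by rw [coeff_toSubring']; exact hqi), mul_one]

end ResidueField

lemma isAlgebraic_adjoin_of_transcendental {k F : Type*} [Field k] [Field F] [Algebra k F]
    {x y : F} (hx : Transcendental k x) (hy : Transcendental k y)
    [Algebra.IsAlgebraic (IntermediateField.adjoin k {x}) F] (f : F) :
    IsAlgebraic (Algebra.adjoin k {y}) f := by
  have hyx : IsAlgebraic (Algebra.adjoin k {x}) y :=
    IntermediateField.isAlgebraic_adjoin_iff.mp (Algebra.IsAlgebraic.isAlgebraic y)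
  have hxy : IsAlgebraic (Algebra.adjoin k {y}) x := by
    simpa using hyx.adjoin_singleton hx hy
  refine IsAlgebraic.adjoin_of_forall_isAlgebraic (s := {x}) (fun z hz => ?_)
    (IntermediateField.isAlgebraic_adjoin_iff.mp (Algebra.IsAlgebraic.isAlgebraic f))
  rwa [hz.1]

lemma IsNonarchimedean.apply_mem_range_of_isAlgebraic {R k F : Type*} [CommRing R] [Field k]
    [IsAlgClosed k] [Field F] [Algebra R F] (va : AbsoluteValue k ℝ) {v : AbsoluteValue F ℝ}
    (hv : IsNonarchimedean v) {A : Subalgebra R F} (hA : ∀ a ∈ A, v a ∈ Set.range va) {f : F}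
    (hf : IsAlgebraic A f) : v f ∈ Set.range va := by
  obtain ⟨P, hP, hPf⟩ := hf
  refine hv.apply_mem_range_of_eval_eq_zero va (P := P.map (algebraMap A F))
    ((Polynomial.map_ne_zero_iff Subtype.val_injective).mpr hP) (fun i => ?_) ?_
  · rw [coeff_map]
    exact hA _ (P.coeff i).2
  · rwa [eval_map_algebraMap]

theorem statement2_general
    {k F : Type*} [Field k] [Field F] [Algebra k F]
    [IsAlgClosed k]
    (va : AbsoluteValue k ℝ) (hka : IsNA va)
    -- F is finitely generated of transcendence degree 1 over k
    (hFfg : ∃ x : F, Transcendental k x ∧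
      FiniteDimensional (IntermediateField.adjoin k {x}) F)
    -- v is an absolute value on F extending that of k
    (v : AbsoluteValue F ℝ) (hv : IsNA v)
    (hvk : ∀ c : k, v (algebraMap k F c) = va c)
    -- v is a point of type II
    (htypeII : ∃ ξ : ResF v hv,
      @IsTranscendenceBasis Unit (ResF va hka) (ResF v hv) _ _
        (resMap (algebraMap k F) va v hka hv hvk).toAlgebra (fun _ => ξ)) :
    {t : ℝ | ∃ f : F, f ≠ 0 ∧ v f = t} = {t : ℝ | ∃ c : k, c ≠ 0 ∧ va c = t} := by
  let := (resMap (algebraMap k F) va v hka hv hvk).toAlgebra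
  obtain ⟨x, hx, hfin⟩ := hFfg
  obtain ⟨ξ, hξ⟩ := htypeII
  obtain ⟨X, rfl⟩ := Ideal.Quotient.mk_surjective ξ
  have hres (p : (ResF va hka)[X])
      (hp : p.eval₂ (resMap (algebraMap k F) va v hka hv hvk) (Ideal.Quotient.mk _ X) = 0) :
      p = 0 :=
    transcendental_iff.mp (hξ.1.transcendental ()) p hp
  have hgauss (p : k[X]) : v (aeval (X : F) p) = p.gaussNorm va 1 :=
    apply_eval₂_eq_gaussNorm (hc := hvk) hres p
  have hXtrans : Transcendental k (X : F) := fun ⟨p, hp, hpX⟩ => hp <|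
    (gaussNorm_eq_zero_iff (p := p) va (c := 1) (fun _ => va.eq_zero.mp) one_pos).mp
      (by rw [← hgauss, hpX, map_zero])
  have hval (f : F) : v f ∈ Set.range va := by
    refine IsNonarchimedean.apply_mem_range_of_isAlgebraic va hv (fun a ha => ?_)
      (isAlgebraic_adjoin_of_transcendental hx hXtrans f)
    obtain ⟨p, rfl⟩ := Algebra.adjoin_singleton_eq_range_aeval k (X : F) ▸ ha
    obtain ⟨i, hi⟩ := p.exists_eq_gaussNorm va 1
    refine ⟨p.coeff i, ?_⟩
    rw [AlgHom.toRingHom_eq_coe, RingHom.coe_coe, hgauss, hi, one_pow, mul_one]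
  ext t
  constructor
  · rintro ⟨f, hf0, rfl⟩
    obtain ⟨c, hc⟩ := hval f
    exact ⟨c, fun h0 => hf0 (v.eq_zero.mp (by rw [← hc, h0, map_zero])), hc⟩
  · rintro ⟨c, hc0, rfl⟩
    exact ⟨algebraMap k F c, (_root_.map_ne_zero _).mpr hc0, hvk c⟩

/-- Let `k` be an algebraically closed field, complete with respect to a
nontrivial nonarchimedean absolute value `va`, and `F/k` a finitely generated extension
of transcendence degree `1`.  If `v` is an absolute value on `F` extending that of `k`
which is a point of type II, then the value group of `v` on `F` equals the value group
of `k`: `v(Fˣ) = |kˣ|` as subgroups (subsets) of the positive reals. -/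
theorem statement2
    {k F : Type*} [Field k] [Field F] [Algebra k F]
    [IsAlgClosed k]
    (va : AbsoluteValue k ℝ) (hka : IsNA va)
    (hknt : ∃ c : k, c ≠ 0 ∧ va c ≠ 1)
    (hkcomplete : SeqComplete va)
    -- F is finitely generated of transcendence degree 1 over k
    (hFfg : ∃ x : F, Transcendental k x ∧
      FiniteDimensional (IntermediateField.adjoin k {x}) F)
    -- v is an absolute value on F extending that of k
    (v : AbsoluteValue F ℝ) (hv : IsNA v)
    (hvk : ∀ c : k, v (algebraMap k F c) = va c)
    -- v is a point of type II
    (htypeII : ∃ ξ : ResF v hv,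
      @IsTranscendenceBasis Unit (ResF va hka) (ResF v hv) _ _
        (resMap (algebraMap k F) va v hka hv hvk).toAlgebra (fun _ => ξ)) :
    {t : ℝ | ∃ f : F, f ≠ 0 ∧ v f = t} = {t : ℝ | ∃ c : k, c ≠ 0 ∧ va c = t} :=
  statement2_general va hka hFfg v hv hvk htypeII
end
end

section
/- Let k be a field equipped with a nonarchimedean absolute value |·| and let r > 0 be a real number. Then the Gauss norm N_r on the polynomial ring k[T], defined by N_r(Σ_i a_i T^i) = max_i |a_i| r^i, is multiplicative: N_r(fg) = N_r(f)·N_r(g) for all f, g ∈ k[T]; moreover N_r(f+g) ≤ max(N_r(f), N_r(g)), N_r(c) = |c| for every constant c ∈ k, and N_r(f) = 0 only if f = 0. -/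
noncomputable section

/-- The Gauss norm `N_r(Σ aᵢ Tⁱ) = max_i |aᵢ| rⁱ` on the polynomial ring `k[T]`. -/
def gaussNorm {k : Type*} [Field k] (va : AbsoluteValue k ℝ) (r : ℝ)
    (f : Polynomial k) : ℝ :=
  ⨆ i : ℕ, va (f.coeff i) * r ^ i

/-- The supremum `sup_{y ∈ B(a,r)} |f(y)|` of `|f|` over the closed ball `B(a,r)`. -/
def supBall {k : Type*} [Field k] (va : AbsoluteValue k ℝ) (a : k) (r : ℝ)
    (f : Polynomial k) : ℝ :=
  sSup ((fun y => va (Polynomial.eval y f)) '' {y : k | va (y - a) ≤ r})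

/-! The supremum is Mathlib's `Polynomial.gaussNorm`, for which multiplicativity is Gauss's
argument: if `i`, `j` are the smallest indices attaining `N_r f` and `N_r g`, then in the
coefficient of `T^(i+j)` of `f * g` the term `aᵢ bⱼ` strictly dominates all others, so the
ultrametric inequality is an equality there. -/

theorem gaussNorm_eq_polynomial_gaussNorm {k : Type*} [Field k] (va : AbsoluteValue k ℝ)
    {r : ℝ} (hr : 0 ≤ r) (f : Polynomial k) :
    gaussNorm va r f = f.gaussNorm va r := by
  rw [← Polynomial.gaussNorm_coe_powerSeries _ _ hr, PowerSeries.gaussNorm_eq]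
  simp only [gaussNorm, Polynomial.coeff_coe]

/-- Let `k` be a field with a nonarchimedean absolute value `va` and
`r > 0` a real number.  Then the Gauss norm `N_r` on `k[T]` is multiplicative:
`N_r (f g) = N_r f * N_r g`; moreover `N_r (f + g) ≤ max (N_r f) (N_r g)`,
`N_r c = |c|` for every constant `c ∈ k`, and `N_r f = 0` only if `f = 0`. -/
theorem statement4 {k : Type*} [Field k] (va : AbsoluteValue k ℝ) (hna : IsNA va)
    (r : ℝ) (hr : 0 < r) :
    (∀ f g : Polynomial k, gaussNorm va r (f * g) = gaussNorm va r f * gaussNorm va r g) ∧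
    (∀ f g : Polynomial k, gaussNorm va r (f + g) ≤ max (gaussNorm va r f) (gaussNorm va r g)) ∧
    (∀ c : k, gaussNorm va r (Polynomial.C c) = va c) ∧
    (∀ f : Polynomial k, gaussNorm va r f = 0 → f = 0) := by
  have hna' : IsNonarchimedean va := hna
  simp only [gaussNorm_eq_polynomial_gaussNorm va hr.le]
  exact ⟨Polynomial.gaussNorm_mul hna' hr,
    Polynomial.isNonarchimedean_gaussNorm va hna' hr.le,
    Polynomial.gaussNorm_C va r,
    fun f ↦ (Polynomial.gaussNorm_eq_zero_iff va (p := f) (fun _ ↦ va.eq_zero.mp) hr).mp⟩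

end
end

section
/- Let k be an algebraically closed field complete with respect to a nontrivial nonarchimedean absolute value |·|, and let (B(a_j, r_j))_{j ∈ J} be a nonempty family of closed balls in k that is totally ordered by inclusion (a nested family). Then the function N on the polynomial ring k[T] defined by N(f) = inf_j sup_{y ∈ B(a_j,r_j)} |f(y)| is a multiplicative seminorm on k[T] extending |·|: N(fg) = N(f)·N(g), N(f+g) ≤ max(N(f), N(g)), and N(c) = |c| for every constant c ∈ k. -/
/-!
Since `k` is algebraically closed, `f = c ∏ (T - ρ)` over its roots. On `B(a, r)` the
ultrametric inequality gives `|y - ρ| ≤ max(r, |ρ - a|)`, hence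
`|f(y)| ≤ |c| ∏ max(r, |ρ - a|)`. Conversely, for `y = a + t` with `|t| = s` different from
every `|ρ - a|`, each factor is exactly `max(s, |ρ - a|)`; as the value group of a nontrivially
valued algebraically closed field is dense, such `s` accumulate at `r` from below, so the sup of
`|f|` on `B(a, r)` equals `|c| ∏ max(r, |ρ - a|)` and is multiplicative in `f`.
Because the balls are nested, the sups for `f` and for `g` decrease together along smaller balls,
so taking the infimum commutes with products and maxima.
-/

noncomputable section

open Polynomial Filter Topology

section InfimumOfDirected

variable {ι : Type*} [Nonempty ι] {F G : ι → ℝ}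

theorem ciInf_mul_eq_of_directed (hF : ∀ i, 0 ≤ F i) (hG : ∀ i, 0 ≤ G i)
    (h : ∀ i j, ∃ l, F l ≤ F i ∧ G l ≤ G j) :
    ⨅ i, F i * G i = (⨅ i, F i) * ⨅ i, G i := by
  have bdd {H : ι → ℝ} (hH : ∀ i, 0 ≤ H i) : BddBelow (Set.range H) :=
    ⟨0, by rintro _ ⟨i, rfl⟩; exact hH i⟩
  refine le_antisymm ?_ (le_ciInf fun i => mul_le_mul (ciInf_le (bdd hF) i) (ciInf_le (bdd hG) i)
    (Real.iInf_nonneg hG) (hF i))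
  rw [Real.iInf_mul_of_nonneg (Real.iInf_nonneg hG)]
  refine le_ciInf fun i => ?_
  rw [Real.mul_iInf_of_nonneg (hF i)]
  refine le_ciInf fun j => ?_
  obtain ⟨l, hFl, hGl⟩ := h i j
  exact (ciInf_le (bdd fun i => mul_nonneg (hF i) (hG i)) l).trans
    (mul_le_mul hFl hGl (hG l) (hF i))

theorem ciInf_le_max_of_directed {H : ι → ℝ} (hH : BddBelow (Set.range H))
    (hHFG : ∀ i, H i ≤ max (F i) (G i)) (h : ∀ i j, ∃ l, F l ≤ F i ∧ G l ≤ G j) :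
    ⨅ i, H i ≤ max (⨅ i, F i) (⨅ i, G i) := by
  by_contra! hlt
  obtain ⟨i, hi⟩ := exists_lt_of_ciInf_lt ((le_max_left _ _).trans_lt hlt)
  obtain ⟨j, hj⟩ := exists_lt_of_ciInf_lt ((le_max_right _ _).trans_lt hlt)
  obtain ⟨l, hFl, hGl⟩ := h i j
  exact ((ciInf_le hH l).trans ((hHFG l).trans (max_le_max hFl hGl))).not_gt (max_lt hi hj)

end InfimumOfDirected

section AbsoluteValue

variable {k : Type*} [Field k] {va : AbsoluteValue k ℝ}

section ValueGroup

variable [IsAlgClosed k] (hnt : ∃ c : k, c ≠ 0 ∧ va c ≠ 1)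
include hnt

theorem exists_one_lt_va_lt {ε : ℝ} (hε : 1 < ε) : ∃ d : k, 1 < va d ∧ va d < ε := by
  obtain ⟨c, hc⟩ : ∃ c : k, 1 < va c := by
    obtain ⟨c, hc0, hc1⟩ := hnt
    rcases hc1.lt_or_gt with h | h
    · exact ⟨c⁻¹, by rw [map_inv₀]; exact (one_lt_inv₀ (va.pos hc0)).2 h⟩
    · exact ⟨c, h⟩
  obtain ⟨m, hm⟩ := pow_unbounded_of_one_lt (va c) hε
  have hm0 : 0 < m := Nat.pos_of_ne_zero fun h => by simp [h] at hm; linarith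
  obtain ⟨d, rfl⟩ := IsAlgClosed.exists_pow_nat_eq c hm0
  rw [map_pow] at hc hm
  exact ⟨d, lt_of_pow_lt_pow_left₀ m (va.nonneg d) (by rwa [one_pow]),
    lt_of_pow_lt_pow_left₀ m (by linarith) hm⟩

theorem exists_va_mem_Ioo {u v : ℝ} (huv : u < v) (hv : 0 < v) :
    ∃ t : k, va t ∈ Set.Ioo u v := by
  set u' := max u (v / 2)
  have hu' : 0 < u' := lt_max_of_lt_right (half_pos hv)
  have hu'v : u' < v := max_lt huv (half_lt_self hv)
  obtain ⟨d, hd1, hdv⟩ := exists_one_lt_va_lt hnt ((one_lt_div hu').2 hu'v)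
  obtain ⟨n, hn, hn1⟩ := exists_mem_Ico_zpow hu' hd1
  refine ⟨d ^ (n + 1), ?_, ?_⟩ <;> rw [map_zpow₀]
  · exact (le_max_left _ _).trans_lt hn1
  · calc va d ^ (n + 1) = va d * va d ^ n := by
          rw [zpow_add_one₀ (by linarith), mul_comm]
      _ ≤ va d * u' := by gcongr
      _ < v := (lt_div_iff₀ hu').1 hdv

theorem frequently_mem_range_nhdsLT {r : ℝ} (hr : 0 < r) : ∃ᶠ s in 𝓝[<] r, s ∈ Set.range va :=
  (nhdsLT_basis r).frequently_iff.2 fun _ hu =>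
    let ⟨t, ht⟩ := exists_va_mem_Ioo hnt hu hr
    ⟨va t, ht, t, rfl⟩

end ValueGroup

def ballNorm (va : AbsoluteValue k ℝ) (a : k) (r : ℝ) (f : k[X]) : ℝ :=
  va f.leadingCoeff * (f.roots.map fun ρ => max r (va (ρ - a))).prod

@[simp]
theorem ballNorm_zero (a : k) (r : ℝ) : ballNorm va a r 0 = 0 := by
  simp [ballNorm]

theorem continuous_ballNorm (a : k) (f : k[X]) : Continuous fun r => ballNorm va a r f :=
  continuous_const.mul (continuous_multiset_prod _ fun _ _ => continuous_id.max continuous_const)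

theorem ballNorm_mul (a : k) (r : ℝ) (f g : k[X]) :
    ballNorm va a r (f * g) = ballNorm va a r f * ballNorm va a r g := by
  rcases eq_or_ne f 0 with rfl | hf
  · simp
  rcases eq_or_ne g 0 with rfl | hg
  · simp
  simp only [ballNorm, leadingCoeff_mul, map_mul, roots_mul (mul_ne_zero hf hg),
    Multiset.map_add, Multiset.prod_add]
  ring

theorem supBall_le {a : k} {r : ℝ} (hr : 0 ≤ r) {f : k[X]} {B : ℝ}
    (h : ∀ y, va (y - a) ≤ r → va (f.eval y) ≤ B) : supBall va a r f ≤ B :=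
  csSup_le ⟨_, a, by simpa using hr, rfl⟩ (by rintro _ ⟨y, hy, rfl⟩; exact h y hy)

theorem supBall_C {a : k} {r : ℝ} (hr : 0 ≤ r) (c : k) : supBall va a r (C c) = va c := by
  simp only [supBall, eval_C]
  rw [Set.Nonempty.image_const ⟨a, by simpa using hr⟩, csSup_singleton]

variable [IsAlgClosed k]

theorem va_eval_eq_prod_roots (f : k[X]) (y : k) :
    va (f.eval y) = va f.leadingCoeff * (f.roots.map fun ρ => va (y - ρ)).prod := by
  conv_lhs => rw [(IsAlgClosed.splits f).eq_prod_roots]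
  simp [eval_multiset_prod, map_multiset_prod, Multiset.map_map]

variable (hna : IsNA va)
include hna

theorem va_eval_le_ballNorm {a y : k} {r : ℝ} (hy : va (y - a) ≤ r) (f : k[X]) :
    va (f.eval y) ≤ ballNorm va a r f := by
  rw [va_eval_eq_prod_roots]
  refine mul_le_mul_of_nonneg_left (Multiset.prod_map_le_prod_map₀ _ _
    (fun _ _ => va.nonneg _) fun ρ _ => ?_) (va.nonneg _)
  calc va (y - ρ) = va ((y - a) + (a - ρ)) := by rw [sub_add_sub_cancel]
    _ ≤ max (va (y - a)) (va (ρ - a)) := by rw [va.map_sub ρ a]; exact hna _ _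
    _ ≤ max r (va (ρ - a)) := max_le_max_right _ hy

theorem va_eval_add_eq_ballNorm (a t : k) (f : k[X])
    (ht : va t ∉ f.roots.map fun ρ => va (ρ - a)) :
    va (f.eval (a + t)) = ballNorm va a (va t) f := by
  rw [va_eval_eq_prod_roots, ballNorm]
  refine congrArg _ (congrArg _ (Multiset.map_congr rfl fun ρ hρ => ?_))
  have hne : va t ≠ va (-(ρ - a)) := by
    rw [map_neg_eq_map]
    exact fun h => ht (h ▸ Multiset.mem_map_of_mem _ hρ)
  rw [show a + t - ρ = t + -(ρ - a) by ring, IsNonarchimedean.add_eq_max_of_ne (f := va) hna hne,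
    map_neg_eq_map]

theorem va_eval_le_supBall {a y : k} {r : ℝ} (hy : va (y - a) ≤ r) (f : k[X]) :
    va (f.eval y) ≤ supBall va a r f :=
  le_csSup ⟨ballNorm va a r f, by rintro _ ⟨z, hz, rfl⟩; exact va_eval_le_ballNorm hna hz f⟩
    ⟨y, hy, rfl⟩

theorem supBall_nonneg (a : k) {r : ℝ} (hr : 0 ≤ r) (f : k[X]) : 0 ≤ supBall va a r f :=
  (va.nonneg _).trans (va_eval_le_supBall hna (y := a) (by simpa using hr) f)

theorem supBall_mono {a b : k} {r s : ℝ} (hr : 0 ≤ r)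
    (hsub : {y : k | va (y - a) ≤ r} ⊆ {y : k | va (y - b) ≤ s}) (f : k[X]) :
    supBall va a r f ≤ supBall va b s f :=
  supBall_le hr fun _ hy => va_eval_le_supBall hna (hsub hy) f

theorem supBall_add_le {a : k} {r : ℝ} (hr : 0 ≤ r) (f g : k[X]) :
    supBall va a r (f + g) ≤ max (supBall va a r f) (supBall va a r g) :=
  supBall_le hr fun _ hy => by
    rw [eval_add]
    exact (hna _ _).trans (max_le_max (va_eval_le_supBall hna hy f) (va_eval_le_supBall hna hy g))

theorem ballNorm_le_supBall (hnt : ∃ c : k, c ≠ 0 ∧ va c ≠ 1) (a : k) {r : ℝ} (hr : 0 < r)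
    (f : k[X]) : ballNorm va a r f ≤ supBall va a r f := by
  have havoid : ∀ᶠ s in 𝓝[<] r, s ∉ (f.roots.map fun ρ => va (ρ - a)).toFinset :=
    (nhdsLT_le_nhdsNE r).trans (nhdsNE_le_cofinite r) (Finset.finite_toSet _).compl_mem_cofinite
  refine le_of_tendsto_of_frequently (x := 𝓝[<] r)
    (((continuous_ballNorm a f).tendsto r).mono_left nhdsWithin_le_nhds) ?_
  refine ((frequently_mem_range_nhdsLT hnt hr).and_eventually
    (havoid.and self_mem_nhdsWithin)).mono ?_
  rintro _ ⟨⟨t, rfl⟩, ht, hlt⟩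
  rw [← va_eval_add_eq_ballNorm hna a t f (by simpa using ht)]
  exact va_eval_le_supBall hna (by simpa using le_of_lt hlt) f

theorem supBall_eq_ballNorm (hnt : ∃ c : k, c ≠ 0 ∧ va c ≠ 1) (a : k) {r : ℝ} (hr : 0 ≤ r)
    (f : k[X]) : supBall va a r f = ballNorm va a r f := by
  refine le_antisymm (supBall_le hr fun _ hy => va_eval_le_ballNorm hna hy f) ?_
  rcases hr.eq_or_lt with rfl | hr
  · calc ballNorm va a 0 f = va (f.eval a) := by
          simp [va_eval_eq_prod_roots f a, ballNorm, va.map_sub a]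
      _ ≤ supBall va a 0 f := va_eval_le_supBall hna (by simp) f
  · exact ballNorm_le_supBall hna hnt a hr f

theorem supBall_mul (hnt : ∃ c : k, c ≠ 0 ∧ va c ≠ 1) (a : k) {r : ℝ} (hr : 0 ≤ r)
    (f g : k[X]) : supBall va a r (f * g) = supBall va a r f * supBall va a r g := by
  simp only [supBall_eq_ballNorm hna hnt a hr, ballNorm_mul]

end AbsoluteValue

theorem statement7_general {k : Type*} [Field k] [IsAlgClosed k]
    (va : AbsoluteValue k ℝ) (hna : IsNA va)
    (hnt : ∃ c : k, c ≠ 0 ∧ va c ≠ 1)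
    {J : Type*} [Nonempty J] (a : J → k) (rr : J → ℝ) (hr : ∀ j, 0 ≤ rr j)
    (hnested : ∀ i j : J,
      {y : k | va (y - a i) ≤ rr i} ⊆ {y : k | va (y - a j) ≤ rr j} ∨
      {y : k | va (y - a j) ≤ rr j} ⊆ {y : k | va (y - a i) ≤ rr i}) :
    (∀ f g : Polynomial k,
        (⨅ j, supBall va (a j) (rr j) (f * g)) =
          (⨅ j, supBall va (a j) (rr j) f) * (⨅ j, supBall va (a j) (rr j) g)) ∧
    (∀ f g : Polynomial k,
        (⨅ j, supBall va (a j) (rr j) (f + g)) ≤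
          max (⨅ j, supBall va (a j) (rr j) f) (⨅ j, supBall va (a j) (rr j) g)) ∧
    (∀ c : k, (⨅ j, supBall va (a j) (rr j) (Polynomial.C c)) = va c) := by
  have hnonneg f j : 0 ≤ supBall va (a j) (rr j) f := supBall_nonneg hna (a j) (hr j) f
  have hdirected f g i j : ∃ l, supBall va (a l) (rr l) f ≤ supBall va (a i) (rr i) f ∧
      supBall va (a l) (rr l) g ≤ supBall va (a j) (rr j) g := by
    rcases hnested i j with h | h
    · exact ⟨i, le_rfl, supBall_mono hna (hr i) h g⟩
    · exact ⟨j, supBall_mono hna (hr j) h f, le_rfl⟩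
  refine ⟨fun f g => ?_, fun f g => ?_, fun c => ?_⟩
  · simp only [supBall_mul hna hnt _ (hr _)]
    exact ciInf_mul_eq_of_directed (hnonneg f) (hnonneg g) (hdirected f g)
  · exact ciInf_le_max_of_directed ⟨0, by rintro _ ⟨j, rfl⟩; exact hnonneg _ j⟩
      (fun j => supBall_add_le hna (hr j) f g) (hdirected f g)
  · simp only [supBall_C (hr _), ciInf_const]

/-- Let `k` be an algebraically closed field, complete with respect to a
nontrivial nonarchimedean absolute value `va`, and let `(B(aⱼ, rⱼ))_{j ∈ J}` be a
nonempty family of closed balls in `k`, totally ordered by inclusion.  Then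
`N(f) = inf_j sup_{y ∈ B(aⱼ,rⱼ)} |f(y)|` is a multiplicative seminorm on `k[T]`
extending `va`. -/
theorem statement7 {k : Type*} [Field k] [IsAlgClosed k]
    (va : AbsoluteValue k ℝ) (hna : IsNA va)
    (hnt : ∃ c : k, c ≠ 0 ∧ va c ≠ 1) (hcomplete : SeqComplete va)
    {J : Type*} [Nonempty J] (a : J → k) (rr : J → ℝ) (hr : ∀ j, 0 ≤ rr j)
    (hnested : ∀ i j : J,
      {y : k | va (y - a i) ≤ rr i} ⊆ {y : k | va (y - a j) ≤ rr j} ∨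
      {y : k | va (y - a j) ≤ rr j} ⊆ {y : k | va (y - a i) ≤ rr i}) :
    (∀ f g : Polynomial k,
        (⨅ j, supBall va (a j) (rr j) (f * g)) =
          (⨅ j, supBall va (a j) (rr j) f) * (⨅ j, supBall va (a j) (rr j) g)) ∧
    (∀ f g : Polynomial k,
        (⨅ j, supBall va (a j) (rr j) (f + g)) ≤
          max (⨅ j, supBall va (a j) (rr j) f) (⨅ j, supBall va (a j) (rr j) g)) ∧
    (∀ c : k, (⨅ j, supBall va (a j) (rr j) (Polynomial.C c)) = va c) :=
  statement7_general va hna hnt a rr hr hnested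
end
end

section
/- Let k be an algebraically closed field complete with respect to a nontrivial nonarchimedean absolute value |·|, and let (B(a_j, r_j))_{j ∈ J} be a nonempty family of closed balls in k that is totally ordered by inclusion and has empty intersection: ⋂_j B(a_j,r_j) = ∅. Then the multiplicative seminorm N on k[T] defined by N(f) = inf_j sup_{y ∈ B(a_j,r_j)} |f(y)| is a norm: N(f) > 0 for every nonzero polynomial f ∈ k[T]. -/
/-!
Every point of `k` escapes some ball of the chain, and the chain is totally ordered, so a single
ball `B(aₘ, rₘ)` misses all the (finitely many) roots of `f`. Factoring `f` over the algebraically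
closed field `k`, each factor `|y - z|` with `y ∈ B(aₘ, rₘ)` equals `|aₘ - z|` by the ultrametric
isosceles principle, so `|f|` is the nonzero constant `|f(aₘ)|` on that ball. Every ball of the
chain meets `B(aₘ, rₘ)`, hence its supremum of `|f|` is at least `|f(aₘ)|`.
-/

noncomputable section

open Polynomial

theorem Directed.exists_forall_notMem_of_iInter_eq_empty {α ι : Type*} [Nonempty ι]
    {B : ι → Set α} (hB : Directed (· ⊇ ·) B) (h : ⋂ i, B i = ∅) (s : Finset α) :
    ∃ i, ∀ z ∈ s, z ∉ B i := by
  classical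
  have hesc : ∀ z, ∃ i, z ∉ B i := by
    simpa [Set.eq_empty_iff_forall_notMem] using h
  choose j hj using hesc
  obtain ⟨m, hm⟩ := hB.finset_le (s.image j)
  exact ⟨m, fun z hz hzm => hj z (hm _ (Finset.mem_image_of_mem j hz) hzm)⟩

section AbsoluteValue

variable {k : Type*} [Field k] {va : AbsoluteValue k ℝ}

theorem IsNonarchimedean.abv_sub_eq_of_lt (hna : IsNonarchimedean va) {a y z : k}
    (h : va (y - a) < va (z - a)) : va (y - z) = va (a - z) := by
  rw [← va.map_sub a z] at h
  rw [← sub_add_sub_cancel y a z]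
  exact hna.add_eq_right_of_lt h

theorem IsNonarchimedean.abv_eval_eq_of_roots_notMem_ball [IsAlgClosed k]
    (hna : IsNonarchimedean va) (f : k[X]) {a y : k} {r : ℝ}
    (hroots : ∀ z ∈ f.roots, r < va (z - a)) (hy : va (y - a) ≤ r) :
    va (f.eval y) = va (f.eval a) := by
  simp only [(IsAlgClosed.splits f).eval_eq_prod_roots, map_mul, map_multiset_prod,
    Multiset.map_map]
  congr 2
  exact Multiset.map_congr rfl fun z hz => hna.abv_sub_eq_of_lt (hy.trans_lt (hroots z hz))

theorem bddAbove_abv_eval_ball (va : AbsoluteValue k ℝ) (f : k[X]) (a : k) (r : ℝ) :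
    BddAbove ((fun y => va (f.eval y)) '' {y | va (y - a) ≤ r}) := by
  refine ⟨∑ i ∈ Finset.range (f.natDegree + 1), va (f.coeff i) * (va a + r) ^ i, ?_⟩
  rintro _ ⟨y, hy, rfl⟩
  have hyle : va y ≤ va a + r := by
    calc va y = va ((y - a) + a) := by rw [sub_add_cancel]
      _ ≤ va (y - a) + va a := va.add_le _ _
      _ ≤ va a + r := by linarith [hy.out]
  dsimp only
  rw [eval_eq_sum_range]
  refine (va.sum_le _ _).trans (Finset.sum_le_sum fun i _ => ?_)
  rw [map_mul, map_pow]
  exact mul_le_mul_of_nonneg_left (pow_le_pow_left₀ (va.nonneg y) hyle i) (va.nonneg _)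

theorem abv_eval_le_supBall {f : k[X]} {a y : k} {r : ℝ} (hy : va (y - a) ≤ r) :
    va (f.eval y) ≤ supBall va a r f :=
  le_csSup (bddAbove_abv_eval_ball va f a r) ⟨y, hy, rfl⟩

end AbsoluteValue

theorem statement8_general {k : Type*} [Field k] [IsAlgClosed k]
    (va : AbsoluteValue k ℝ) (hna : IsNA va)
    {J : Type*} [Nonempty J] (a : J → k) (rr : J → ℝ) (hr : ∀ j, 0 ≤ rr j)
    (hnested : ∀ i j : J,
      {y : k | va (y - a i) ≤ rr i} ⊆ {y : k | va (y - a j) ≤ rr j} ∨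
      {y : k | va (y - a j) ≤ rr j} ⊆ {y : k | va (y - a i) ≤ rr i})
    (hempty : (⋂ j : J, {y : k | va (y - a j) ≤ rr j}) = ∅) :
    ∀ f : Polynomial k, f ≠ 0 → 0 < ⨅ j, supBall va (a j) (rr j) f := by
  classical
  intro f hf
  set B : J → Set k := fun j => {y | va (y - a j) ≤ rr j}
  have hcenter : ∀ j, a j ∈ B j := fun j => by simpa [B] using hr j
  have hdir : Directed (· ⊇ ·) B := fun i j =>
    (hnested i j).elim (fun h => ⟨i, subset_rfl, h⟩) (fun h => ⟨j, h, subset_rfl⟩)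
  obtain ⟨m, hm⟩ := hdir.exists_forall_notMem_of_iInter_eq_empty hempty f.roots.toFinset
  have hroots : ∀ z ∈ f.roots, rr m < va (z - a m) := fun z hz =>
    not_le.mp (hm z (Multiset.mem_toFinset.mpr hz))
  have hpos : 0 < va (f.eval (a m)) := va.pos fun h0 =>
    hm _ (Multiset.mem_toFinset.mpr ((mem_roots hf).mpr h0)) (hcenter m)
  refine hpos.trans_le (le_ciInf fun j => ?_)
  obtain ⟨y, hyj, hym⟩ : ∃ y, y ∈ B j ∧ y ∈ B m := (hnested j m).elim
    (fun h => ⟨a j, hcenter j, h (hcenter j)⟩) (fun h => ⟨a m, h (hcenter m), hcenter m⟩)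
  rw [← IsNonarchimedean.abv_eval_eq_of_roots_notMem_ball hna f hroots hym]
  exact abv_eval_le_supBall hyj

/-- Let `k` be an algebraically closed field, complete with respect to a
nontrivial nonarchimedean absolute value `va`, and let `(B(aⱼ, rⱼ))_{j ∈ J}` be a
nonempty family of closed balls in `k`, totally ordered by inclusion and with empty
intersection.  Then the multiplicative seminorm
`N(f) = inf_j sup_{y ∈ B(aⱼ,rⱼ)} |f(y)|` on `k[T]` is a norm: `N(f) > 0` for every
nonzero polynomial `f`. -/
theorem statement8 {k : Type*} [Field k] [IsAlgClosed k]
    (va : AbsoluteValue k ℝ) (hna : IsNA va)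
    (hnt : ∃ c : k, c ≠ 0 ∧ va c ≠ 1) (hcomplete : SeqComplete va)
    {J : Type*} [Nonempty J] (a : J → k) (rr : J → ℝ) (hr : ∀ j, 0 ≤ rr j)
    (hnested : ∀ i j : J,
      {y : k | va (y - a i) ≤ rr i} ⊆ {y : k | va (y - a j) ≤ rr j} ∨
      {y : k | va (y - a j) ≤ rr j} ⊆ {y : k | va (y - a i) ≤ rr i})
    (hempty : (⋂ j : J, {y : k | va (y - a j) ≤ rr j}) = ∅) :
    ∀ f : Polynomial k, f ≠ 0 → 0 < ⨅ j, supBall va (a j) (rr j) f :=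
  statement8_general va hna a rr hr hnested hempty

end
end

section
/- Let k be an algebraically closed field complete with respect to a nontrivial nonarchimedean absolute value |·|, and let N be a multiplicative seminorm on the polynomial ring k[T] extending |·|. Then there exists a nonempty family of closed balls (B(a_j, r_j))_{j ∈ J} in k (with radii r_j ≥ 0) that is totally ordered by inclusion, such that N(f) = inf_j sup_{y ∈ B(a_j,r_j)} |f(y)| for all f ∈ k[T]. In particular every point of the Berkovich affine line over k is of one of the types I–IV: evaluation at a point of k, a Gauss norm η_{a,r} with r ∈ |k^×|, a Gauss norm η_{a,r} with r ∉ |k^×|, or the infimum of Gauss norms over a nested family of balls with empty intersection. -/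
/-!
Write `ρ a = N (T - a)`. Factoring `f = c ∏ (T - b)` over `k` gives `N f = |c| ∏ ρ b`, and the
ultrametric inequality gives `sup_{B(a,r)} |f| = |c| ∏ max r |b - a|`: the supremum is approached
at points `y` with `|y - a|` just below `r` and different from every `|b - a|`, which exist because
`|k^×|` is dense in `(0, ∞)`. Since `|a - b| ≤ max (ρ a) (ρ b)` and `ρ b ≤ max (ρ a) |b - a|`, the
balls `B(a, ρ a)` are totally ordered by inclusion and
`N f ≤ sup_{B(a, ρ a)} |f| ≤ |c| ∏ max (ρ a) (ρ b)`; along a sequence with `ρ aₙ → inf ρ` the right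
side tends to `N f`.
-/

noncomputable section

open Polynomial Set Filter Topology

theorem continuous_mul_prod_max {ι : Type*} (c : ℝ) (s : Multiset ι) (w : ι → ℝ) :
    Continuous fun x : ℝ => c * (s.map fun i => max x (w i)).prod :=
  continuous_const.mul (continuous_multiset_prod _ fun _ _ => continuous_id.max continuous_const)

namespace AbsoluteValue

variable {k : Type*} [Field k] {va : AbsoluteValue k ℝ}

theorem exists_abv_mem_Ioo [IsAlgClosed k] (hnt : ∃ c : k, c ≠ 0 ∧ va c ≠ 1) {u v : ℝ}
    (hu : 0 < u) (huv : u < v) : ∃ x : k, va x ∈ Ioo u v := by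
  obtain ⟨c, hc0, hc1⟩ : ∃ c : k, c ≠ 0 ∧ va c < 1 := by
    obtain ⟨c, hc0, hc1⟩ := hnt
    rcases hc1.lt_or_gt with h | h
    · exact ⟨c, hc0, h⟩
    · exact ⟨c⁻¹, inv_ne_zero hc0, by rw [map_inv₀]; exact inv_lt_one_of_one_lt₀ h⟩
  have hv : 0 < v := hu.trans huv
  obtain ⟨n, hn⟩ := exists_pow_lt_of_lt_one (va.pos hc0) ((div_lt_one hv).2 huv)
  have hn0 : n ≠ 0 := by rintro rfl; rw [pow_zero] at hn; linarith
  obtain ⟨t, rfl⟩ := IsAlgClosed.exists_pow_nat_eq c (Nat.pos_of_ne_zero hn0)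
  rw [map_pow] at hn hc1
  have ht1 : va t < 1 := (pow_lt_one_iff_of_nonneg (va.nonneg t) hn0).1 hc1
  have ht : u / v < va t := (pow_lt_pow_iff_left₀ (by positivity) (va.nonneg t) hn0).1 hn
  have ht0 : 0 < va t := (div_pos hu hv).trans ht
  -- the powers of `|t|⁻¹` grow by a factor `< v / u` at each step, so one of them lies in `(u, v)`
  obtain ⟨m, hm1, hm2⟩ := exists_mem_Ico_zpow hu ((one_lt_inv₀ ht0).2 ht1)
  refine ⟨t⁻¹ ^ (m + 1), ?_, ?_⟩ <;> rw [map_zpow₀, map_inv₀]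
  · exact hm2
  · rw [zpow_add_one₀ (inv_ne_zero ht0.ne')]
    calc (va t)⁻¹ ^ m * (va t)⁻¹ ≤ u * (va t)⁻¹ := by gcongr
      _ < u * (u / v)⁻¹ := by gcongr
      _ = v := by field_simp

theorem exists_abv_mem_Ioo_notMem [IsAlgClosed k] (hnt : ∃ c : k, c ≠ 0 ∧ va c ≠ 1)
    (F : Finset ℝ) {u v : ℝ} (hu : 0 < u) (huv : u < v) :
    ∃ x : k, va x ∈ Ioo u v ∧ va x ∉ F := by
  induction F using Finset.induction_on generalizing u with
  | empty => simpa using exists_abv_mem_Ioo hnt hu huv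
  | insert t F _ ih =>
    by_cases ht : t < v
    · obtain ⟨x, ⟨hux, hxv⟩, hxF⟩ := ih (lt_max_of_lt_left hu) (max_lt huv ht)
      refine ⟨x, ⟨(le_max_left u t).trans_lt hux, hxv⟩, ?_⟩
      simp [hxF, ((le_max_right u t).trans_lt hux).ne']
    · obtain ⟨x, ⟨hux, hxv⟩, hxF⟩ := ih hu huv
      exact ⟨x, ⟨hux, hxv⟩, by simp [hxF, (hxv.trans_le (not_lt.1 ht)).ne]⟩

theorem sub_eq_max_of_ne (hna : IsNA va) {x y : k} (h : va x ≠ va y) :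
    va (x - y) = max (va x) (va y) := by
  rw [sub_eq_add_neg, IsNonarchimedean.add_eq_max_of_ne hna (by rwa [va.map_neg]), va.map_neg]

theorem setOf_sub_le_subset (hna : IsNA va) {a b : k} {r s : ℝ} (hrs : r ≤ s)
    (hab : va (a - b) ≤ s) : {y : k | va (y - a) ≤ r} ⊆ {y : k | va (y - b) ≤ s} := by
  intro y (hy : va (y - a) ≤ r)
  calc va (y - b) = va ((y - a) + (a - b)) := by rw [sub_add_sub_cancel]
    _ ≤ s := (hna _ _).trans (max_le (hy.trans hrs) hab)

theorem eval_eq_prod_roots [IsAlgClosed k] (f : k[X]) (y : k) :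
    va (f.eval y) = va f.leadingCoeff * (f.roots.map fun b => va (y - b)).prod := by
  rw [(IsAlgClosed.splits f).eval_eq_prod_roots, map_mul, map_multiset_prod, Multiset.map_map]
  rfl

theorem eval_le_prod_max [IsAlgClosed k] (hna : IsNA va) (f : k[X]) {a y : k}
    {r : ℝ} (hy : va (y - a) ≤ r) :
    va (f.eval y) ≤ va f.leadingCoeff * (f.roots.map fun b => max r (va (b - a))).prod := by
  rw [va.eval_eq_prod_roots]
  refine mul_le_mul_of_nonneg_left (Multiset.prod_map_le_prod_map₀ _ _
    (fun _ _ => va.nonneg _) fun b _ => ?_) (va.nonneg _)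
  calc va (y - b) = va ((y - a) + -(b - a)) := by ring_nf
    _ ≤ max r (va (b - a)) := (hna _ _).trans (by rw [va.map_neg]; exact max_le_max_right _ hy)

theorem eval_eq_prod_max [IsAlgClosed k] (hna : IsNA va) (f : k[X]) {a y : k}
    (hy : ∀ b ∈ f.roots, va (y - a) ≠ va (b - a)) :
    va (f.eval y) =
      va f.leadingCoeff * (f.roots.map fun b => max (va (y - a)) (va (b - a))).prod := by
  rw [va.eval_eq_prod_roots]
  congr 2
  refine Multiset.map_congr rfl fun b hb => ?_
  rw [← va.sub_eq_max_of_ne hna (hy b hb), sub_sub_sub_cancel_right]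

end AbsoluteValue

theorem Polynomial.map_eq_leadingCoeff_mul_prod_roots {k M : Type*} [Field k] [IsAlgClosed k]
    [CommMonoid M] (φ : k[X] →* M) (f : k[X]) :
    φ f = φ (C f.leadingCoeff) * (f.roots.map fun b => φ (X - C b)).prod := by
  conv_lhs => rw [(IsAlgClosed.splits f).eq_prod_roots]
  rw [map_mul, map_multiset_prod, Multiset.map_map]
  rfl

section

variable {k : Type*} [Field k] {va : AbsoluteValue k ℝ}

theorem supBall_eq_prod_roots [IsAlgClosed k] (hna : IsNA va) (hnt : ∃ c : k, c ≠ 0 ∧ va c ≠ 1)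
    (f : k[X]) (a : k) {r : ℝ} (hr : 0 ≤ r) :
    supBall va a r f = va f.leadingCoeff * (f.roots.map fun b => max r (va (b - a))).prod := by
  set P : ℝ → ℝ := fun s => va f.leadingCoeff * (f.roots.map fun b => max s (va (b - a))).prod
  have hP_mono : Monotone P := fun s t hst =>
    mul_le_mul_of_nonneg_left (Multiset.prod_map_le_prod_map₀ _ _
      (fun _ _ => (va.nonneg _).trans (le_max_right _ _)) fun _ _ => max_le_max_right _ hst)
      (va.nonneg _)
  have hle : ∀ y, va (y - a) ≤ r → va (f.eval y) ≤ P r := fun _ => va.eval_le_prod_max hna f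
  have hbdd : BddAbove ((fun y => va (f.eval y)) '' {y : k | va (y - a) ≤ r}) :=
    ⟨P r, forall_mem_image.2 hle⟩
  have hmem : ∀ y, va (y - a) ≤ r → va (f.eval y) ≤ supBall va a r f := fun y hy =>
    le_csSup hbdd (mem_image_of_mem _ hy)
  refine le_antisymm (csSup_le ⟨_, mem_image_of_mem _ (show va (a - a) ≤ r by simpa using hr)⟩
    (forall_mem_image.2 hle)) ?_
  rcases hr.eq_or_lt with rfl | hr
  · refine le_of_eq_of_le ?_ (hmem a (by simp))
    simp only [va.eval_eq_prod_roots, max_eq_right (va.nonneg _), va.map_sub]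
  -- for `0 < s < r` evaluate at a point `y` with `s < |y - a| < r` avoiding every `|b - a|`
  have hPs : ∀ s ∈ Ioo 0 r, P s ≤ supBall va a r f := fun s hs => by
    obtain ⟨x, ⟨hsx, hxr⟩, hxF⟩ := va.exists_abv_mem_Ioo_notMem hnt
      (f.roots.map fun b => va (b - a)).toFinset hs.1 hs.2
    have hval : va (f.eval (a + x)) = P (va x) := by
      simpa using va.eval_eq_prod_max hna f (y := a + x) (a := a) fun b hb h =>
        hxF (Multiset.mem_toFinset.2 (Multiset.mem_map.2 ⟨b, hb, by rw [← h, add_sub_cancel_left]⟩))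
    calc P s ≤ P (va x) := hP_mono hsx.le
      _ = va (f.eval (a + x)) := hval.symm
      _ ≤ supBall va a r f := hmem _ (by simpa using hxr.le)
  exact le_of_tendsto ((continuous_mul_prod_max _ _ _).tendsto r |>.mono_left nhdsWithin_le_nhds)
    (eventually_of_mem (Ioo_mem_nhdsLT hr) hPs)

theorem seminorm_X_sub_C_le {N : k[X] → ℝ} (hNmax : ∀ f g : k[X], N (f + g) ≤ max (N f) (N g))
    (hNconst : ∀ c : k, N (C c) = va c) (a b : k) :
    N (X - C b) ≤ max (N (X - C a)) (va (b - a)) := by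
  calc N (X - C b) = N ((X - C a) + C (a - b)) := by rw [C_sub]; ring_nf
    _ ≤ max (N (X - C a)) (N (C (a - b))) := hNmax _ _
    _ = max (N (X - C a)) (va (b - a)) := by rw [hNconst, va.map_sub]

theorem abv_sub_le_seminorm_X_sub_C {N : k[X] → ℝ} (hNmul : ∀ f g : k[X], N (f * g) = N f * N g)
    (hNmax : ∀ f g : k[X], N (f + g) ≤ max (N f) (N g)) (hNconst : ∀ c : k, N (C c) = va c)
    (a b : k) : va (a - b) ≤ max (N (X - C a)) (N (X - C b)) := by
  have hneg : N (-(X - C a)) = N (X - C a) := by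
    rw [neg_eq_neg_one_mul, ← C_1, ← C_neg, hNmul, hNconst, va.map_neg, va.map_one, one_mul]
  calc va (a - b) = N ((X - C b) + -(X - C a)) := by rw [← hNconst, C_sub]; ring_nf
    _ ≤ max (N (X - C b)) (N (-(X - C a))) := hNmax _ _
    _ = max (N (X - C a)) (N (X - C b)) := by rw [hneg, max_comm]

theorem seminorm_eq_prod_roots [IsAlgClosed k] {N : k[X] → ℝ}
    (hNmul : ∀ f g : k[X], N (f * g) = N f * N g) (hNconst : ∀ c : k, N (C c) = va c) (f : k[X]) :
    N f = va f.leadingCoeff * (f.roots.map fun b => N (X - C b)).prod := by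
  let φ : k[X] →* ℝ := ⟨⟨N, by rw [← C_1, hNconst, va.map_one]⟩, hNmul⟩
  rw [← hNconst]
  exact map_eq_leadingCoeff_mul_prod_roots φ f

theorem seminorm_le_supBall [IsAlgClosed k] (hna : IsNA va) (hnt : ∃ c : k, c ≠ 0 ∧ va c ≠ 1)
    {N : k[X] → ℝ} (hN0 : ∀ f : k[X], 0 ≤ N f) (hNmul : ∀ f g : k[X], N (f * g) = N f * N g)
    (hNmax : ∀ f g : k[X], N (f + g) ≤ max (N f) (N g)) (hNconst : ∀ c : k, N (C c) = va c)
    (f : k[X]) (a : k) : N f ≤ supBall va a (N (X - C a)) f := by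
  rw [seminorm_eq_prod_roots hNmul hNconst, supBall_eq_prod_roots hna hnt f a (hN0 _)]
  exact mul_le_mul_of_nonneg_left (Multiset.prod_map_le_prod_map₀ _ _ (fun _ _ => hN0 _)
    fun b _ => seminorm_X_sub_C_le hNmax hNconst a b) (va.nonneg _)

theorem supBall_le_prod_max_seminorm [IsAlgClosed k] (hna : IsNA va)
    (hnt : ∃ c : k, c ≠ 0 ∧ va c ≠ 1)
    {N : k[X] → ℝ} (hN0 : ∀ f : k[X], 0 ≤ N f) (hNmul : ∀ f g : k[X], N (f * g) = N f * N g)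
    (hNmax : ∀ f g : k[X], N (f + g) ≤ max (N f) (N g)) (hNconst : ∀ c : k, N (C c) = va c)
    (f : k[X]) (a : k) :
    supBall va a (N (X - C a)) f ≤
      va f.leadingCoeff * (f.roots.map fun b => max (N (X - C a)) (N (X - C b))).prod := by
  rw [supBall_eq_prod_roots hna hnt f a (hN0 _)]
  refine mul_le_mul_of_nonneg_left (Multiset.prod_map_le_prod_map₀ _ _
    (fun _ _ => (hN0 _).trans (le_max_left _ _)) fun b _ => max_le (le_max_left _ _) ?_)
    (va.nonneg _)
  exact (abv_sub_le_seminorm_X_sub_C hNmul hNmax hNconst b a).trans (max_comm _ _).le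

end

theorem statement9_general {k : Type*} [Field k] [IsAlgClosed k]
    (va : AbsoluteValue k ℝ) (hna : IsNA va)
    (hnt : ∃ c : k, c ≠ 0 ∧ va c ≠ 1)
    (N : Polynomial k → ℝ)
    (hN0 : ∀ f : Polynomial k, 0 ≤ N f)
    (hNmul : ∀ f g : Polynomial k, N (f * g) = N f * N g)
    (hNmax : ∀ f g : Polynomial k, N (f + g) ≤ max (N f) (N g))
    (hNconst : ∀ c : k, N (Polynomial.C c) = va c) :
    ∃ (J : Type) (_ : Nonempty J) (a : J → k) (rr : J → ℝ),
      (∀ j, 0 ≤ rr j) ∧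
      (∀ i j : J,
        {y : k | va (y - a i) ≤ rr i} ⊆ {y : k | va (y - a j) ≤ rr j} ∨
        {y : k | va (y - a j) ≤ rr j} ⊆ {y : k | va (y - a i) ≤ rr i}) ∧
      (∀ f : Polynomial k, N f = ⨅ j, supBall va (a j) (rr j) f) := by
  set ρ : k → ℝ := fun a => N (X - C a)
  have hρ_bdd : BddBelow (range ρ) := ⟨0, forall_mem_range.2 fun _ => hN0 _⟩
  obtain ⟨u, -, hu_lim, hu_mem⟩ := exists_seq_tendsto_sInf (range_nonempty ρ) hρ_bdd
  choose a ha using hu_mem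
  refine ⟨ℕ, ⟨0⟩, a, fun n => ρ (a n), fun n => hN0 _, fun i j => ?_, fun f => ?_⟩
  · have hball := abv_sub_le_seminorm_X_sub_C hNmul hNmax hNconst
    rcases le_total (ρ (a i)) (ρ (a j)) with h | h
    · exact .inl (va.setOf_sub_le_subset hna h ((hball _ _).trans (max_le h le_rfl)))
    · exact .inr (va.setOf_sub_le_subset hna h ((hball _ _).trans (max_le h le_rfl)))
  have hle := seminorm_le_supBall hna hnt hN0 hNmul hNmax hNconst f
  refine le_antisymm (le_ciInf fun n => hle _) ?_
  set g : ℝ → ℝ := fun x => va f.leadingCoeff * (f.roots.map fun b => max x (ρ b)).prod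
  have hg : g (sInf (range ρ)) = N f := by
    rw [seminorm_eq_prod_roots hNmul hNconst]
    refine congrArg (va f.leadingCoeff * ·) (congrArg Multiset.prod ?_)
    exact Multiset.map_congr rfl fun b _ => max_eq_right (csInf_le hρ_bdd (mem_range_self b))
  have hlim : Tendsto (fun n => g (ρ (a n))) atTop (𝓝 (N f)) := by
    simp only [ha]
    exact hg ▸ ((continuous_mul_prod_max _ _ _).tendsto _).comp hu_lim
  exact ge_of_tendsto' hlim fun n => (ciInf_le ⟨N f, forall_mem_range.2 fun n => hle _⟩ n).trans
    (supBall_le_prod_max_seminorm hna hnt hN0 hNmul hNmax hNconst f (a n))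

/-- Let `k` be an algebraically closed field, complete with respect to a
nontrivial nonarchimedean absolute value `va`, and let `N` be a multiplicative seminorm
on `k[T]` extending `va`.  Then there exists a nonempty family of closed balls
`(B(aⱼ, rⱼ))_{j ∈ J}` in `k` (with radii `rⱼ ≥ 0`), totally ordered by inclusion, such
that `N(f) = inf_j sup_{y ∈ B(aⱼ,rⱼ)} |f(y)|` for all `f ∈ k[T]`.  (In particular every
point of the Berkovich affine line over `k` is of one of the types I–IV.) -/
theorem statement9 {k : Type*} [Field k] [IsAlgClosed k]
    (va : AbsoluteValue k ℝ) (hna : IsNA va)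
    (hnt : ∃ c : k, c ≠ 0 ∧ va c ≠ 1) (hcomplete : SeqComplete va)
    (N : Polynomial k → ℝ)
    (hN0 : ∀ f : Polynomial k, 0 ≤ N f)
    (hNmul : ∀ f g : Polynomial k, N (f * g) = N f * N g)
    (hNmax : ∀ f g : Polynomial k, N (f + g) ≤ max (N f) (N g))
    (hNconst : ∀ c : k, N (Polynomial.C c) = va c) :
    ∃ (J : Type) (_ : Nonempty J) (a : J → k) (rr : J → ℝ),
      (∀ j, 0 ≤ rr j) ∧
      (∀ i j : J,
        {y : k | va (y - a i) ≤ rr i} ⊆ {y : k | va (y - a j) ≤ rr j} ∨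
        {y : k | va (y - a j) ≤ rr j} ⊆ {y : k | va (y - a i) ≤ rr i}) ∧
      (∀ f : Polynomial k, N f = ⨅ j, supBall va (a j) (rr j) f) :=
  statement9_general va hna hnt N hN0 hNmul hNmax hNconst

end
end

section
/- Let k be an algebraically closed field complete with respect to a nontrivial nonarchimedean absolute value |·|, and let r > 0 be a real number. The set D(r) of all multiplicative seminorms N on the polynomial ring k[T] extending |·| that satisfy N(T) ≤ r, equipped with the topology of pointwise convergence (the subspace topology induced from the product topology on functions k[T] → ℝ), is a compact Hausdorff topological space. -/
/-!
Every `N ∈ D(r)` satisfies `0 ≤ N f ≤ ∑ |aᵢ| rⁱ` for `f = ∑ aᵢ Tⁱ`, so `D(r)` lies in a product of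
compact intervals, compact by Tychonoff; the defining conditions are closed under pointwise limits,
so `D(r)` is a closed subset of it. Hausdorffness is inherited from `ℝ^k[T]`.
-/

noncomputable section

/-- The Berkovich closed disk of radius `r`: the set of multiplicative seminorms on
`k[T]` extending the absolute value of `k` and satisfying `N(T) ≤ r`. -/
def BerkDisk {k : Type*} [Field k] (va : AbsoluteValue k ℝ) (r : ℝ) :
    Set (Polynomial k → ℝ) :=
  {N | (∀ f : Polynomial k, 0 ≤ N f) ∧
    (∀ f g : Polynomial k, N (f * g) = N f * N g) ∧
    (∀ f g : Polynomial k, N (f + g) ≤ max (N f) (N g)) ∧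
    (∀ c : k, N (Polynomial.C c) = va c) ∧
    N Polynomial.X ≤ r}

open Polynomial

section BerkDisk

variable {k : Type*} [Field k] {va : AbsoluteValue k ℝ} {r : ℝ} {N : k[X] → ℝ}

theorem isClosed_berkDisk : IsClosed (BerkDisk va r) := by
  simp only [BerkDisk, Set.ofPred_and, Set.ofPred_forall]
  refine .inter (isClosed_iInter fun f => isClosed_le continuous_const (continuous_apply f)) <|
    .inter (isClosed_iInter fun f => isClosed_iInter fun g =>
      isClosed_eq (continuous_apply _) ((continuous_apply f).mul (continuous_apply g))) <|
    .inter (isClosed_iInter fun f => isClosed_iInter fun g =>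
      isClosed_le (continuous_apply _) ((continuous_apply f).max (continuous_apply g))) <|
    .inter (isClosed_iInter fun c => isClosed_eq (continuous_apply _) continuous_const)
      (isClosed_le (continuous_apply X) continuous_const)

theorem map_sum_le_sum_of_mem_berkDisk (hN : N ∈ BerkDisk va r) {ι : Type*} (s : Finset ι)
    (g : ι → k[X]) : N (∑ i ∈ s, g i) ≤ ∑ i ∈ s, N (g i) := by
  obtain ⟨h0, -, hadd, hC, -⟩ := hN
  refine Finset.le_sum_of_subadditive N (by simpa using (hC 0).le) (fun f g => ?_) s g
  exact (hadd f g).trans (max_le_add_of_nonneg (h0 f) (h0 g))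

theorem map_X_pow_of_mem_berkDisk (hN : N ∈ BerkDisk va r) (n : ℕ) :
    N (X ^ n) = N X ^ n := by
  obtain ⟨-, hmul, -, hC, -⟩ := hN
  induction n with
  | zero => simpa using hC 1
  | succ n ih => rw [pow_succ, hmul, ih, pow_succ]

theorem le_sum_coeff_mul_pow_of_mem_berkDisk (hN : N ∈ BerkDisk va r) (f : k[X]) :
    N f ≤ ∑ i ∈ f.support, va (f.coeff i) * r ^ i := by
  obtain ⟨h0, hmul, -, hC, hX⟩ := id hN
  calc N f = N (∑ i ∈ f.support, C (f.coeff i) * X ^ i) := by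
        rw [← f.as_sum_support_C_mul_X_pow]
    _ ≤ ∑ i ∈ f.support, N (C (f.coeff i) * X ^ i) := map_sum_le_sum_of_mem_berkDisk hN _ _
    _ ≤ ∑ i ∈ f.support, va (f.coeff i) * r ^ i := by
        gcongr with i
        rw [hmul, hC, map_X_pow_of_mem_berkDisk hN]
        gcongr
        exact h0 X

theorem isCompact_berkDisk : IsCompact (BerkDisk va r) := by
  have hbox : BerkDisk va r ⊆ Set.univ.pi fun f : k[X] =>
      Set.Icc 0 (∑ i ∈ f.support, va (f.coeff i) * r ^ i) :=
    fun N hN f _ => ⟨hN.1 f, le_sum_coeff_mul_pow_of_mem_berkDisk hN f⟩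
  exact (isCompact_univ_pi fun f => isCompact_Icc).of_isClosed_subset isClosed_berkDisk hbox

end BerkDisk

theorem statement10_general {k : Type*} [Field k] (va : AbsoluteValue k ℝ) (r : ℝ) :
    CompactSpace (BerkDisk va r) ∧ T2Space (BerkDisk va r) :=
  ⟨isCompact_iff_compactSpace.mp isCompact_berkDisk, inferInstance⟩

/-- Let `k` be an algebraically closed field, complete with respect to
a nontrivial nonarchimedean absolute value `va`, and let `r > 0`.  The set `D(r)` of all
multiplicative seminorms on `k[T]` extending `va` with `N(T) ≤ r`, equipped with the
topology of pointwise convergence, is a compact Hausdorff topological space. -/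
theorem statement10 {k : Type*} [Field k] [IsAlgClosed k]
    (va : AbsoluteValue k ℝ) (hna : IsNA va)
    (hnt : ∃ c : k, c ≠ 0 ∧ va c ≠ 1) (hcomplete : SeqComplete va)
    (r : ℝ) (hr : 0 < r) :
    CompactSpace (BerkDisk va r) ∧ T2Space (BerkDisk va r) :=
  statement10_general va r

end
end

section
/- Let k be a field equipped with a nonarchimedean absolute value |·|. The map Φ from the interval (0,∞) of positive reals to the space of functions k[T] → ℝ (equipped with the product topology, i.e., the topology of pointwise convergence) sending t to the Gauss norm N_t, where N_t(Σ_i a_i T^i) = max_i |a_i| t^i, is a topological embedding: it is injective, continuous, and a homeomorphism onto its image. Consequently, for real numbers 0 < r < R, the skeleton {N_t : r < t < R} of the open annulus is homeomorphic to the real interval (log r, log R) via N_t ↦ log t. -/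
noncomputable section

/-! Since `N_t(T) = t`, evaluation at `T` is a continuous left inverse of `t ↦ N_t`, and each
coordinate `t ↦ N_t(f)` is continuous, being a finite maximum of monomials in `t`; so `t ↦ N_t` is
an embedding. On the annulus, the homeomorphism onto the image is followed by `log`. -/

open Set Topology
open scoped Polynomial

section GaussNorm

variable {k : Type*} [Field k] (va : AbsoluteValue k ℝ)

/-- Including the index `natDegree f + 1`, whose term vanishes, makes this hold also for `r < 0`,
where the terms of a polynomial may be negative. -/
theorem gaussNorm_eq_sup' (r : ℝ) (f : k[X]) :
    gaussNorm va r f = (Finset.range (f.natDegree + 2)).sup' Finset.nonempty_range_add_one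
      (fun i => va (f.coeff i) * r ^ i) := by
  set S := (Finset.range (f.natDegree + 2)).sup' Finset.nonempty_range_add_one
    (fun i => va (f.coeff i) * r ^ i)
  have le_S : ∀ i, va (f.coeff i) * r ^ i ≤ S := by
    intro i
    by_cases hi : i < f.natDegree + 2
    · exact Finset.le_sup' (fun i => va (f.coeff i) * r ^ i) (Finset.mem_range.mpr hi)
    · have hdeg (j : ℕ) (hj : f.natDegree < j) : va (f.coeff j) * r ^ j = 0 := by
        simp [Polynomial.coeff_eq_zero_of_natDegree_lt hj]
      rw [hdeg i (by omega), ← hdeg (f.natDegree + 1) (by omega)]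
      exact Finset.le_sup' (fun i => va (f.coeff i) * r ^ i) (by simp)
  exact le_antisymm (ciSup_le le_S)
    (Finset.sup'_le _ _ fun i _ => le_ciSup ⟨S, forall_mem_range.mpr le_S⟩ i)

theorem continuous_gaussNorm : Continuous (gaussNorm va) := by
  refine continuous_pi fun f => ?_
  simp_rw [gaussNorm_eq_sup']
  exact Continuous.finset_sup'_apply _ fun i _ => continuous_const.mul (continuous_pow i)

theorem gaussNorm_X {r : ℝ} (hr : 0 ≤ r) : gaussNorm va r (Polynomial.X : k[X]) = r := by
  refine ciSup_eq_of_forall_le_of_forall_lt_exists_gt (fun i => ?_) fun w hw => ⟨1, by simpa⟩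
  rcases eq_or_ne i 1 with rfl | hi
  · simp
  · simp [Polynomial.coeff_X, Ne.symm hi, hr]

theorem isEmbedding_gaussNorm_restrict {s : Set ℝ} (hs : s ⊆ Ici 0) :
    IsEmbedding fun r : s => gaussNorm va r := by
  refine IsEmbedding.of_comp ((continuous_gaussNorm va).comp continuous_subtype_val)
    (continuous_apply (Polynomial.X : k[X])) ?_
  convert IsEmbedding.subtypeVal
  funext r
  exact gaussNorm_X va (hs r.2)

end GaussNorm

def Real.logIooHomeomorph {r R : ℝ} (hr : 0 < r) (hR : 0 < R) :
    Ioo r R ≃ₜ Ioo (Real.log r) (Real.log R) where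
  toFun t := ⟨Real.log t, Real.log_lt_log hr t.2.1, Real.log_lt_log (hr.trans t.2.1) t.2.2⟩
  invFun s :=
    ⟨Real.exp s, (Real.log_lt_iff_lt_exp hr).mp s.2.1, (Real.lt_log_iff_exp_lt hR).mp s.2.2⟩
  left_inv t := Subtype.ext (Real.exp_log (hr.trans t.2.1))
  right_inv s := Subtype.ext (Real.log_exp s)
  continuous_toFun := (Real.continuousOn_log.comp_continuous continuous_subtype_val
    fun t => (hr.trans t.2.1).ne').subtype_mk _
  continuous_invFun := (Real.continuous_exp.comp continuous_subtype_val).subtype_mk _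

theorem statement11_general {k : Type*} [Field k] (va : AbsoluteValue k ℝ) :
    Topology.IsEmbedding (fun t : Set.Ioi (0 : ℝ) => gaussNorm va (t : ℝ)) ∧
    ∀ r R : ℝ, 0 < r → r < R →
      ∃ e : {N : Polynomial k → ℝ // ∃ t : ℝ, r < t ∧ t < R ∧ N = gaussNorm va t} ≃ₜ
          Set.Ioo (Real.log r) (Real.log R),
        ∀ (t : ℝ) (h1 : r < t) (h2 : t < R),
          (e ⟨gaussNorm va t, t, h1, h2, rfl⟩ : ℝ) = Real.log t := by
  refine ⟨isEmbedding_gaussNorm_restrict va Ioi_subset_Ici_self, fun r R hr hrR => ?_⟩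
  have hemb := isEmbedding_gaussNorm_restrict va (s := Ioo r R) fun t ht => (hr.trans ht.1).le
  have skeleton_eq : {N | ∃ t, r < t ∧ t < R ∧ N = gaussNorm va t} =
      range fun t : Ioo r R => gaussNorm va t := by
    ext N
    simp [eq_comm, and_assoc]
  refine ⟨(Homeomorph.setCongr skeleton_eq).trans
    (hemb.toHomeomorph.symm.trans (Real.logIooHomeomorph hr (hr.trans hrR))), fun t h1 h2 => ?_⟩
  exact congrArg (Real.log ∘ Subtype.val) (hemb.toHomeomorph_symm_apply ⟨t, h1, h2⟩)

/-- Let `k` be a field with a nonarchimedean absolute value `va`.  The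
map `Φ : (0,∞) → (k[T] → ℝ)`, `t ↦ N_t` (the Gauss norm of radius `t`), is a topological
embedding for the topology of pointwise convergence; consequently, for `0 < r < R`, the
skeleton `{N_t : r < t < R}` of the open annulus is homeomorphic to the real interval
`(log r, log R)` via `N_t ↦ log t`. -/
theorem statement11 {k : Type*} [Field k] (va : AbsoluteValue k ℝ) (hna : IsNA va) :
    Topology.IsEmbedding (fun t : Set.Ioi (0 : ℝ) => gaussNorm va (t : ℝ)) ∧
    ∀ r R : ℝ, 0 < r → r < R →
      ∃ e : {N : Polynomial k → ℝ // ∃ t : ℝ, r < t ∧ t < R ∧ N = gaussNorm va t} ≃ₜ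
          Set.Ioo (Real.log r) (Real.log R),
        ∀ (t : ℝ) (h1 : r < t) (h2 : t < R),
          (e ⟨gaussNorm va t, t, h1, h2, rfl⟩ : ℝ) = Real.log t :=
  statement11_general va

end
end
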